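/- (Partial completeness of Unwinding I) If the quantum system 𝕊 is secure with respect to policy ↝, i.e. K(𝕊,↝) = 0, then for each agent a ∈ A there exists an equivalence relation ∼ₐ on reachable density operators satisfying: (step consistency) ρ ∼ₐ σ implies 𝓔_{b,c}(ρ) ∼ₐ 𝓔_{b,c}(σ) for all b ∈ A, c ∈ C; (observation consistency) ρ ∼ₐ σ implies d_a(ρ,σ) = 0; and (local respect of ↝) ¬(b ↝ a) implies ρ ∼ₐ 𝓔_{b,c}(ρ) for all c ∈ C and all reachable ρ. -/

import Mathlib

open scoped Classical ComplexOrder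
open Matrix Kronecker

noncomputable section

/-- A density operator: positive semidefinite with trace 1. -/
def IsDensity {d : Type} [Fintype d] [DecidableEq d] (ρ : Matrix d d ℂ) : Prop :=
  ρ.PosSemidef ∧ ρ.trace = 1

/-- A super-operator: a linear, positive, trace-preserving map on matrices. -/
def IsSuperOp {d : Type} [Fintype d] [DecidableEq d]
    (F : Matrix d d ℂ → Matrix d d ℂ) : Prop :=
  IsLinearMap ℂ F ∧ (∀ ρ : Matrix d d ℂ, ρ.PosSemidef → (F ρ).PosSemidef) ∧
    (∀ ρ : Matrix d d ℂ, (F ρ).trace = ρ.trace)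

/-- A finite family of matrices (the data of a measurement). -/
structure PMeas (d : Type) where
  m : ℕ
  E : Fin m → Matrix d d ℂ

/-- The family is a POVM: positive semidefinite elements summing to the identity. -/
def PMeas.IsPOVM {d : Type} [Fintype d] [DecidableEq d] (P : PMeas d) : Prop :=
  (∀ i, (P.E i).PosSemidef) ∧ ∑ i, P.E i = 1

/-- The distance between outcome distributions of a measurement on two states. -/
def dE {d : Type} [Fintype d] (P : PMeas d) (ρ σ : Matrix d d ℂ) : ℝ :=
  (1 / 2) * ∑ i, ‖(P.E i * ρ).trace - (P.E i * σ).trace‖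

/-- The measurement pseudo-distance induced by a set of measurements. -/
def dM {d : Type} [Fintype d] (M : Set (PMeas d)) (ρ σ : Matrix d d ℂ) : ℝ :=
  sSup { x | ∃ P ∈ M, x = dE P ρ σ }

/-- A quantum system: initial state, agents, commands, super-operators, measurements. -/
structure QSystem (Agent Cmd d : Type) where
  ρ0 : Matrix d d ℂ
  A : Set Agent
  C : Set Cmd
  Ecmd : Agent → Cmd → Matrix d d ℂ → Matrix d d ℂ
  M : Agent → Set (PMeas d)

/-- Well-formedness: the initial state is a density operator, commands act as
super-operators, and agents measure with POVMs. -/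
def QSystem.WellFormed {Agent Cmd d : Type} [Fintype d] [DecidableEq d]
    (S : QSystem Agent Cmd d) : Prop :=
  IsDensity S.ρ0 ∧ (∀ a ∈ S.A, ∀ c ∈ S.C, IsSuperOp (S.Ecmd a c)) ∧
    (∀ a ∈ S.A, ∀ P ∈ S.M a, P.IsPOVM)

/-- Execution of a finite action sequence (composition of super-operators, in order). -/
def QSystem.run {Agent Cmd d : Type} (S : QSystem Agent Cmd d)
    (α : List (Agent × Cmd)) (ρ : Matrix d d ℂ) : Matrix d d ℂ :=
  α.foldl (fun τ p => S.Ecmd p.1 p.2 τ) ρ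

/-- A sequence over A × C. -/
def QSystem.Valid {Agent Cmd d : Type} (S : QSystem Agent Cmd d)
    (α : List (Agent × Cmd)) : Prop :=
  ∀ p ∈ α, p.1 ∈ S.A ∧ p.2 ∈ S.C

/-- `purge G D α` deletes from `α` every pair `(a, c)` with `a ∈ G` and `c ∈ D`. -/
def purge {Agent Cmd : Type} (G : Set Agent) (D : Set Cmd) :
    List (Agent × Cmd) → List (Agent × Cmd)
  | [] => []
  | p :: rest => if p.1 ∈ G ∧ p.2 ∈ D then purge G D rest else p :: purge G D rest

/-- A reachable density operator. -/
def QSystem.Reachable {Agent Cmd d : Type} (S : QSystem Agent Cmd d)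
    (ρ : Matrix d d ℂ) : Prop :=
  ∃ α, S.Valid α ∧ S.run α S.ρ0 = ρ

/-- `∇ a`: the set of agents from which information may not flow to `a`. -/
def nabla {Agent : Type} (pol : Agent → Agent → Prop) (a : Agent) : Set Agent :=
  { b | ¬ pol b a }

/-- The security degree `K(𝕊,↝)`. -/
def Kdeg {Agent Cmd d : Type} [Fintype d] (S : QSystem Agent Cmd d)
    (pol : Agent → Agent → Prop) : ℝ :=
  sSup { x | ∃ a ∈ S.A, ∃ α, S.Valid α ∧
    x = dM (S.M a) (S.run α S.ρ0) (S.run (purge (nabla pol a) Set.univ α) S.ρ0) }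

/-- The `t`-bounded security degree `K_t(𝕊,↝)`. -/
def Kt {Agent Cmd d : Type} [Fintype d] (S : QSystem Agent Cmd d)
    (pol : Agent → Agent → Prop) (t : ℕ) : ℝ :=
  sSup { x | ∃ a ∈ S.A, ∃ α, S.Valid α ∧ α.length ≤ t ∧
    x = dM (S.M a) (S.run α S.ρ0) (S.run (purge (nabla pol a) Set.univ α) S.ρ0) }

/-- The interference degree `Int(G₁, D | G₂)`. -/
def IntDeg {Agent Cmd d : Type} [Fintype d] (S : QSystem Agent Cmd d)
    (G1 : Set Agent) (D : Set Cmd) (G2 : Set Agent) : ℝ :=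
  sSup { x | ∃ a ∈ G2, ∃ α, S.Valid α ∧
    x = dM (S.M a) (S.run α S.ρ0) (S.run (purge G1 D α) S.ρ0) }

/-- Square root of a positive semidefinite matrix (as in the older Mathlib). -/
def Matrix.PosSemidef.sqrt {d : Type} [Fintype d] [DecidableEq d] {A : Matrix d d ℂ}
    (hA : A.PosSemidef) : Matrix d d ℂ :=
  hA.1.eigenvectorUnitary.1 * diagonal ((↑) ∘ Real.sqrt ∘ hA.1.eigenvalues) *
    (star hA.1.eigenvectorUnitary : Matrix d d ℂ)

/-- Trace distance `d(ρ,σ) = (1/2)·tr √((ρ−σ)†(ρ−σ))`. -/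
def traceDist {d : Type} [Fintype d] [DecidableEq d] (ρ σ : Matrix d d ℂ) : ℝ :=
  (1 / 2) * ((Matrix.posSemidef_conjTranspose_mul_self (ρ - σ)).sqrt.trace).re

end

/-!
Every `d_E` is at most 1 on density operators, so the supremum `K(𝕊,↝)` is over a bounded set
and `K(𝕊,↝) = 0` forces every measurement of `a` to have the same outcome statistics on a run
and on its `∇a`-purge. Take `ρ ∼ₐ σ` to mean that after every continuation every measurement of
`a` has the same statistics on both: an equivalence, stable under every command, forcing
`d_a = 0`. For local respect, write a reachable `ρ` as `𝓔_α(ρ₀)`: if `b ∈ ∇a`, then for any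
continuation `γ` the runs `α γ` and `α (b,c) γ` have the same `∇a`-purge, hence the same
statistics for `a`.
-/

noncomputable section

namespace Matrix.PosSemidef

variable {d : Type} [Fintype d] [DecidableEq d]

open scoped MatrixOrder in
theorem trace_mul_nonneg {A B : Matrix d d ℂ} (hA : A.PosSemidef) (hB : B.PosSemidef) :
    0 ≤ (A * B).trace := by
  have hsqrt : (CFC.sqrt A)ᴴ = CFC.sqrt A := (CFC.sqrt_nonneg A).posSemidef.1.eq
  have hAB : (A * B).trace = (CFC.sqrt A * B * CFC.sqrt A).trace := by
    conv_lhs => rw [← CFC.sqrt_mul_sqrt_self A hA.nonneg, mul_assoc]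
    exact trace_mul_comm _ _
  simpa only [hAB, hsqrt] using (hB.conjTranspose_mul_mul_same (CFC.sqrt A)).trace_nonneg

end Matrix.PosSemidef

section Measurement

variable {d : Type} [Fintype d]

def PMeas.outcomes (P : PMeas d) (ρ : Matrix d d ℂ) : Fin P.m → ℂ :=
  fun i => (P.E i * ρ).trace

theorem dE_nonneg (P : PMeas d) (ρ σ : Matrix d d ℂ) : 0 ≤ dE P ρ σ := by
  unfold dE
  positivity

theorem dE_eq_zero_iff {P : PMeas d} {ρ σ : Matrix d d ℂ} :
    dE P ρ σ = 0 ↔ P.outcomes ρ = P.outcomes σ := by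
  rw [dE, mul_eq_zero, or_iff_right (by norm_num),
    Finset.sum_eq_zero_iff_of_nonneg fun _ _ => norm_nonneg _, funext_iff]
  simp only [Finset.mem_univ, true_implies, norm_eq_zero, sub_eq_zero, PMeas.outcomes]

theorem dM_nonneg (M : Set (PMeas d)) (ρ σ : Matrix d d ℂ) : 0 ≤ dM M ρ σ :=
  Real.sSup_nonneg fun _ ⟨P, _, hx⟩ => hx ▸ dE_nonneg P ρ σ

variable [DecidableEq d]

theorem PMeas.IsPOVM.sum_norm_outcomes {P : PMeas d} (hP : P.IsPOVM) {ρ : Matrix d d ℂ}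
    (hρ : IsDensity ρ) : ∑ i, ‖P.outcomes ρ i‖ = 1 := by
  have hnonneg i : 0 ≤ P.outcomes ρ i := (hP.1 i).trace_mul_nonneg hρ.1
  have hsum : ∑ i, P.outcomes ρ i = 1 := by
    simp only [PMeas.outcomes]
    rw [← trace_sum, ← Finset.sum_mul, hP.2, one_mul, hρ.2]
  exact_mod_cast (Finset.sum_congr rfl fun i _ => Complex.norm_of_nonneg' (hnonneg i)).trans hsum

theorem PMeas.IsPOVM.dE_le_one {P : PMeas d} (hP : P.IsPOVM) {ρ σ : Matrix d d ℂ}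
    (hρ : IsDensity ρ) (hσ : IsDensity σ) : dE P ρ σ ≤ 1 := by
  have htri : ∑ i, ‖P.outcomes ρ i - P.outcomes σ i‖ ≤
      ∑ i, ‖P.outcomes ρ i‖ + ∑ i, ‖P.outcomes σ i‖ := by
    rw [← Finset.sum_add_distrib]
    exact Finset.sum_le_sum fun i _ => norm_sub_le _ _
  rw [hP.sum_norm_outcomes hρ, hP.sum_norm_outcomes hσ] at htri
  change 1 / 2 * ∑ i, ‖P.outcomes ρ i - P.outcomes σ i‖ ≤ 1
  linarith

theorem dM_le_one {M : Set (PMeas d)} (hM : ∀ P ∈ M, P.IsPOVM) {ρ σ : Matrix d d ℂ}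
    (hρ : IsDensity ρ) (hσ : IsDensity σ) : dM M ρ σ ≤ 1 :=
  Real.sSup_le (fun _ ⟨P, hP, hx⟩ => hx ▸ (hM P hP).dE_le_one hρ hσ) zero_le_one

theorem dM_eq_zero_iff {M : Set (PMeas d)} (hM : ∀ P ∈ M, P.IsPOVM) {ρ σ : Matrix d d ℂ}
    (hρ : IsDensity ρ) (hσ : IsDensity σ) : dM M ρ σ = 0 ↔ ∀ P ∈ M, dE P ρ σ = 0 := by
  constructor
  · intro h P hP
    have hbdd : BddAbove {x | ∃ P ∈ M, x = dE P ρ σ} :=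
      ⟨1, fun _ ⟨Q, hQ, hx⟩ => hx ▸ (hM Q hQ).dE_le_one hρ hσ⟩
    exact le_antisymm (h ▸ le_csSup hbdd ⟨P, hP, rfl⟩) (dE_nonneg P ρ σ)
  · intro h
    exact le_antisymm (Real.sSup_le (fun _ ⟨P, hP, hx⟩ => (hx.trans (h P hP)).le) le_rfl)
      (dM_nonneg M ρ σ)

end Measurement

theorem purge_eq_filter {Agent Cmd : Type} (G : Set Agent) (D : Set Cmd)
    (α : List (Agent × Cmd)) : purge G D α = α.filter fun p => !decide (p.1 ∈ G ∧ p.2 ∈ D) := by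
  induction α with
  | nil => rfl
  | cons p α ih =>
    rw [purge, List.filter_cons, ih]
    by_cases h : p.1 ∈ G ∧ p.2 ∈ D <;> simp [h]

namespace QSystem

variable {Agent Cmd d : Type} (S : QSystem Agent Cmd d)

theorem run_append (α β : List (Agent × Cmd)) (ρ : Matrix d d ℂ) :
    S.run (α ++ β) ρ = S.run β (S.run α ρ) :=
  List.foldl_append

variable {S}

theorem valid_cons {p : Agent × Cmd} {α : List (Agent × Cmd)} :
    S.Valid (p :: α) ↔ (p.1 ∈ S.A ∧ p.2 ∈ S.C) ∧ S.Valid α :=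
  List.forall_mem_cons

theorem valid_append {α β : List (Agent × Cmd)} :
    S.Valid (α ++ β) ↔ S.Valid α ∧ S.Valid β :=
  List.forall_mem_append

theorem Valid.purge {α : List (Agent × Cmd)} (hα : S.Valid α) (G : Set Agent) (D : Set Cmd) :
    S.Valid (_root_.purge G D α) := by
  rw [purge_eq_filter]
  exact fun p hp => hα p (List.mem_of_mem_filter hp)

variable [Fintype d]

def Indist (S : QSystem Agent Cmd d) (a : Agent) (ρ σ : Matrix d d ℂ) : Prop :=
  ∀ γ, S.Valid γ → ∀ P ∈ S.M a, P.outcomes (S.run γ ρ) = P.outcomes (S.run γ σ)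

theorem indist_equivalence (a : Agent) : Equivalence (S.Indist a) where
  refl _ _ _ _ _ := rfl
  symm h γ hγ P hP := (h γ hγ P hP).symm
  trans h₁ h₂ γ hγ P hP := (h₁ γ hγ P hP).trans (h₂ γ hγ P hP)

theorem Indist.ecmd {a b : Agent} {c : Cmd} (hb : b ∈ S.A) (hc : c ∈ S.C)
    {ρ σ : Matrix d d ℂ} (h : S.Indist a ρ σ) :
    S.Indist a (S.Ecmd b c ρ) (S.Ecmd b c σ) := by
  unfold Indist at h ⊢
  exact fun γ hγ => h ((b, c) :: γ) (valid_cons.2 ⟨⟨hb, hc⟩, hγ⟩)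

variable [DecidableEq d]

theorem WellFormed.isDensity_run (hS : S.WellFormed) {α : List (Agent × Cmd)}
    (hα : S.Valid α) {ρ : Matrix d d ℂ} (hρ : IsDensity ρ) : IsDensity (S.run α ρ) := by
  induction α generalizing ρ with
  | nil => exact hρ
  | cons p α ih =>
    obtain ⟨⟨hpA, hpC⟩, hα⟩ := valid_cons.1 hα
    obtain ⟨-, hpos, htr⟩ := hS.2.1 p.1 hpA p.2 hpC
    exact ih hα ⟨hpos ρ hρ.1, (htr ρ).trans hρ.2⟩

theorem WellFormed.isDensity_of_reachable (hS : S.WellFormed) {ρ : Matrix d d ℂ}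
    (hρ : S.Reachable ρ) : IsDensity ρ := by
  obtain ⟨α, hα, rfl⟩ := hρ
  exact hS.isDensity_run hα hS.1

theorem Indist.dM_eq_zero (hS : S.WellFormed) {a : Agent} (ha : a ∈ S.A)
    {ρ σ : Matrix d d ℂ} (hρ : S.Reachable ρ) (hσ : S.Reachable σ) (h : S.Indist a ρ σ) :
    dM (S.M a) ρ σ = 0 := by
  unfold Indist at h
  exact (dM_eq_zero_iff (hS.2.2 a ha) (hS.isDensity_of_reachable hρ)
    (hS.isDensity_of_reachable hσ)).2 fun P hP =>
      dE_eq_zero_iff.2 (h [] (List.forall_mem_nil _) P hP)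

theorem WellFormed.outcomes_run_eq_purge (hS : S.WellFormed) {pol : Agent → Agent → Prop}
    (hsec : Kdeg S pol = 0) {a : Agent} (ha : a ∈ S.A) {α : List (Agent × Cmd)}
    (hα : S.Valid α) {P : PMeas d} (hP : P ∈ S.M a) :
    P.outcomes (S.run α S.ρ0) = P.outcomes (S.run (purge (nabla pol a) Set.univ α) S.ρ0) := by
  have hρ β (hβ : S.Valid β) : IsDensity (S.run β S.ρ0) := hS.isDensity_run hβ hS.1
  have hbdd : BddAbove {x | ∃ b ∈ S.A, ∃ β, S.Valid β ∧
      x = dM (S.M b) (S.run β S.ρ0) (S.run (purge (nabla pol b) Set.univ β) S.ρ0)} :=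
    ⟨1, fun _ ⟨b, hb, β, hβ, hx⟩ => hx ▸ dM_le_one (hS.2.2 b hb) (hρ β hβ) (hρ _ (hβ.purge _ _))⟩
  have hdM : dM (S.M a) (S.run α S.ρ0) (S.run (purge (nabla pol a) Set.univ α) S.ρ0) = 0 :=
    le_antisymm (hsec ▸ le_csSup hbdd ⟨a, ha, α, hα, rfl⟩) (dM_nonneg _ _ _)
  exact dE_eq_zero_iff.1
    ((dM_eq_zero_iff (hS.2.2 a ha) (hρ α hα) (hρ _ (hα.purge _ _))).1 hdM P hP)

theorem WellFormed.indist_ecmd_of_not_pol (hS : S.WellFormed) {pol : Agent → Agent → Prop}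
    (hsec : Kdeg S pol = 0) {a b : Agent} {c : Cmd} (ha : a ∈ S.A) (hb : b ∈ S.A)
    (hba : ¬ pol b a) (hc : c ∈ S.C) {ρ : Matrix d d ℂ} (hρ : S.Reachable ρ) :
    S.Indist a ρ (S.Ecmd b c ρ) := by
  obtain ⟨α, hα, rfl⟩ := hρ
  unfold Indist
  intro γ hγ P hP
  have hpurge : purge (nabla pol a) Set.univ (α ++ (b, c) :: γ) =
      purge (nabla pol a) Set.univ (α ++ γ) := by
    simp only [purge_eq_filter, List.filter_append, List.filter_cons]
    simp [nabla, hba]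
  calc P.outcomes (S.run γ (S.run α S.ρ0))
      = P.outcomes (S.run (purge (nabla pol a) Set.univ (α ++ γ)) S.ρ0) := by
        rw [← run_append, hS.outcomes_run_eq_purge hsec ha (valid_append.2 ⟨hα, hγ⟩) hP]
    _ = P.outcomes (S.run γ (S.Ecmd b c (S.run α S.ρ0))) := by
        rw [← hpurge, ← hS.outcomes_run_eq_purge hsec ha
          (valid_append.2 ⟨hα, valid_cons.2 ⟨⟨hb, hc⟩, hγ⟩⟩) hP, run_append]
        rfl

end QSystem

theorem partial_completeness_unwinding_I_general {Agent Cmd d : Type}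
    [Fintype d] [DecidableEq d]
    (S : QSystem Agent Cmd d) (hS : S.WellFormed)
    (pol : Agent → Agent → Prop)
    (hsec : Kdeg S pol = 0) :
    ∃ sim : Agent → Matrix d d ℂ → Matrix d d ℂ → Prop,
      (∀ a ∈ S.A, ∀ ρ, S.Reachable ρ → sim a ρ ρ) ∧
      (∀ a ∈ S.A, ∀ ρ σ, S.Reachable ρ → S.Reachable σ →
        sim a ρ σ → sim a σ ρ) ∧
      (∀ a ∈ S.A, ∀ ρ σ τ, S.Reachable ρ → S.Reachable σ → S.Reachable τ →
        sim a ρ σ → sim a σ τ → sim a ρ τ) ∧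
      (∀ a ∈ S.A, ∀ b ∈ S.A, ∀ c ∈ S.C, ∀ ρ σ, S.Reachable ρ → S.Reachable σ →
        sim a ρ σ → sim a (S.Ecmd b c ρ) (S.Ecmd b c σ)) ∧
      (∀ a ∈ S.A, ∀ ρ σ, S.Reachable ρ → S.Reachable σ →
        sim a ρ σ → dM (S.M a) ρ σ = 0) ∧
      (∀ a ∈ S.A, ∀ b ∈ S.A, ¬ pol b a → ∀ c ∈ S.C, ∀ ρ, S.Reachable ρ →
        sim a ρ (S.Ecmd b c ρ)) :=
  ⟨S.Indist,
    fun a _ ρ _ => (S.indist_equivalence a).refl ρ,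
    fun a _ _ _ _ _ => (S.indist_equivalence a).symm,
    fun a _ _ _ _ _ _ _ => (S.indist_equivalence a).trans,
    fun _ _ _ hb _ hc _ _ _ _ h => h.ecmd hb hc,
    fun _ ha _ _ hρ hσ h => h.dM_eq_zero hS ha hρ hσ,
    fun _ ha _ hb hba _ hc _ hρ => hS.indist_ecmd_of_not_pol hsec ha hb hba hc hρ⟩

/-- **Partial completeness of Unwinding I.** If `K(𝕊,↝) = 0`, then there is a family of
equivalence relations on reachable density operators satisfying step consistency,
observation consistency and local respect of the policy. -/
theorem partial_completeness_unwinding_I {Agent Cmd d : Type}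
    [Fintype d] [DecidableEq d] [Nonempty d]
    (S : QSystem Agent Cmd d) (hS : S.WellFormed)
    (pol : Agent → Agent → Prop) (hpol : ∀ a ∈ S.A, pol a a)
    (hsec : Kdeg S pol = 0) :
    ∃ sim : Agent → Matrix d d ℂ → Matrix d d ℂ → Prop,
      (∀ a ∈ S.A, ∀ ρ, S.Reachable ρ → sim a ρ ρ) ∧
      (∀ a ∈ S.A, ∀ ρ σ, S.Reachable ρ → S.Reachable σ →
        sim a ρ σ → sim a σ ρ) ∧
      (∀ a ∈ S.A, ∀ ρ σ τ, S.Reachable ρ → S.Reachable σ → S.Reachable τ →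
        sim a ρ σ → sim a σ τ → sim a ρ τ) ∧
      (∀ a ∈ S.A, ∀ b ∈ S.A, ∀ c ∈ S.C, ∀ ρ σ, S.Reachable ρ → S.Reachable σ →
        sim a ρ σ → sim a (S.Ecmd b c ρ) (S.Ecmd b c σ)) ∧
      (∀ a ∈ S.A, ∀ ρ σ, S.Reachable ρ → S.Reachable σ →
        sim a ρ σ → dM (S.M a) ρ σ = 0) ∧
      (∀ a ∈ S.A, ∀ b ∈ S.A, ¬ pol b a → ∀ c ∈ S.C, ∀ ρ, S.Reachable ρ →
        sim a ρ (S.Ecmd b c ρ)) :=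
  partial_completeness_unwinding_I_general S hS pol hsec

end
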